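/- Fix an integer k ≥ 2 and let α = λ + n where λ is either 0 or a limit ordinal and n is a natural number. If λ = 0 then hNil_k(α) = (k^n − 1)/(k − 1) = Σ_{i=0}^{n−1} k^i; otherwise hNil_k(α) = k^α + Σ_{i=0}^{n−1} k^i, where k^α denotes ordinal exponentiation. -/

import Mathlib

/-- Natural (Hessenberg) addition of ordinals, as `Ordinal.nadd` was defined in older Mathlib
(`max (blsub a fun a' _ => nadd a' b) (blsub b fun b' _ => nadd a b')`). -/
noncomputable def Ordinal.nadd (a b : Ordinal.{u}) : Ordinal.{u} :=
  max (⨆ a' : Set.Iio a, Order.succ (Ordinal.nadd a'.1 b))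
    (⨆ b' : Set.Iio b, Order.succ (Ordinal.nadd a b'.1))
termination_by (a, b)
decreasing_by
  · exact Prod.Lex.left _ _ a'.2
  · exact Prod.Lex.right _ b'.2

/-- `nmulNat γ k` is the `k`-fold natural (Hessenberg) sum `γ ⊕ ⋯ ⊕ γ`. -/
noncomputable def nmulNat (γ : Ordinal) : ℕ → Ordinal
  | 0 => 0
  | n + 1 => Ordinal.nadd (nmulNat γ n) γ

/-- `hNil k α = sup { hNil k β * k + 1 : β < α }`, where `* k` is the `k`-fold natural sum. -/
noncomputable def hNil (k : ℕ) (α : Ordinal) : Ordinal :=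
  ⨆ β : Set.Iio α, nmulNat (hNil k β.1) k + 1
termination_by α
decreasing_by exact β.2

/-!
The natural sum of `ω ^ e * a + s` and `ω ^ e * b + t` (with `a b s t` finite) is
`ω ^ e * (a + b) + (s + t)`. This rests on `ω ^ e` being closed under `♯`, proved by induction
on `e` together with that coefficientwise rule one level down. For a limit `λ` we have
`k ^ λ = ω ^ e` with `λ = ω * e`, so each successor step `λ + n ↦ λ + n + 1` multiplies the
leading coefficient `k ^ n` by `k` and sends the finite tail `S` to `S * k + 1`. At a limit `λ`,
`hNil k λ` is squeezed between `k ^ β ≤ hNil k (β + 1)` and `hNil k β < k ^ (β + 1)` for `β < λ`,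
which follow from the formula at smaller limits.
-/

open Order Finset

universe u v

infixl:65 " ♯ " => Ordinal.nadd

namespace Ordinal

theorem nadd_le_iff {a b c : Ordinal} :
    a ♯ b ≤ c ↔ (∀ a' < a, a' ♯ b < c) ∧ ∀ b' < b, a ♯ b' < c := by
  rw [nadd]
  simp only [max_le_iff, Ordinal.iSup_le_iff, succ_le_iff, Subtype.forall, Set.mem_Iio]

theorem lt_nadd_iff {a b c : Ordinal} :
    a < b ♯ c ↔ (∃ b' < b, a ≤ b' ♯ c) ∨ ∃ c' < c, a ≤ b ♯ c' := by
  rw [← not_le, nadd_le_iff]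
  simp only [not_and_or, not_forall, not_lt, exists_prop]

theorem nadd_lt_nadd_left {b c : Ordinal} (h : b < c) (a : Ordinal) : a ♯ b < a ♯ c :=
  lt_nadd_iff.2 (Or.inr ⟨b, h, le_rfl⟩)

theorem nadd_lt_nadd_right {b c : Ordinal} (h : b < c) (a : Ordinal) : b ♯ a < c ♯ a :=
  lt_nadd_iff.2 (Or.inl ⟨b, h, le_rfl⟩)

theorem nadd_le_nadd_left {b c : Ordinal} (h : b ≤ c) (a : Ordinal) : a ♯ b ≤ a ♯ c :=
  StrictMono.monotone (fun _ _ h ↦ nadd_lt_nadd_left h a) h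

theorem nadd_le_nadd_right {b c : Ordinal} (h : b ≤ c) (a : Ordinal) : b ♯ a ≤ c ♯ a :=
  StrictMono.monotone (fun _ _ h ↦ nadd_lt_nadd_right h a) h

theorem nadd_le_nadd {a b c d : Ordinal} (hab : a ≤ b) (hcd : c ≤ d) : a ♯ c ≤ b ♯ d :=
  (nadd_le_nadd_right hab c).trans (nadd_le_nadd_left hcd b)

theorem nadd_comm (a b : Ordinal) : a ♯ b = b ♯ a := by
  suffices h : ∀ a b : Ordinal, a ♯ b ≤ b ♯ a from (h a b).antisymm (h b a)
  intro a b
  induction a using WellFoundedLT.induction generalizing b with | ind a iha =>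
  induction b using WellFoundedLT.induction with | ind b ihb =>
  exact nadd_le_iff.2 ⟨fun a' ha ↦ (iha a' ha b).trans_lt (nadd_lt_nadd_left ha b),
    fun b' hb ↦ (ihb b' hb).trans_lt (nadd_lt_nadd_right hb a)⟩

theorem nadd_assoc (a b c : Ordinal) : a ♯ b ♯ c = a ♯ (b ♯ c) := by
  induction a using WellFoundedLT.induction generalizing b c with | ind a iha =>
  induction b using WellFoundedLT.induction generalizing c with | ind b ihb =>
  induction c using WellFoundedLT.induction with | ind c ihc =>
  apply le_antisymm
  · refine nadd_le_iff.2 ⟨fun x hx ↦ ?_, fun c' hc ↦ ?_⟩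
    · rcases lt_nadd_iff.1 hx with ⟨a', ha, hx⟩ | ⟨b', hb, hx⟩
      · calc x ♯ c ≤ a' ♯ b ♯ c := nadd_le_nadd_right hx c
          _ = a' ♯ (b ♯ c) := iha a' ha b c
          _ < a ♯ (b ♯ c) := nadd_lt_nadd_right ha _
      · calc x ♯ c ≤ a ♯ b' ♯ c := nadd_le_nadd_right hx c
          _ = a ♯ (b' ♯ c) := ihb b' hb c
          _ < a ♯ (b ♯ c) := nadd_lt_nadd_left (nadd_lt_nadd_right hb c) a
    · rw [ihc c' hc]
      exact nadd_lt_nadd_left (nadd_lt_nadd_left hc b) a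
  · refine nadd_le_iff.2 ⟨fun a' ha ↦ ?_, fun y hy ↦ ?_⟩
    · rw [← iha a' ha b c]
      exact nadd_lt_nadd_right (nadd_lt_nadd_right ha b) c
    · rcases lt_nadd_iff.1 hy with ⟨b', hb, hy⟩ | ⟨c', hc, hy⟩
      · calc a ♯ y ≤ a ♯ (b' ♯ c) := nadd_le_nadd_left hy a
          _ = a ♯ b' ♯ c := (ihb b' hb c).symm
          _ < a ♯ b ♯ c := nadd_lt_nadd_right (nadd_lt_nadd_left hb a) c
      · calc a ♯ y ≤ a ♯ (b ♯ c') := nadd_le_nadd_left hy a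
          _ = a ♯ b ♯ c' := (ihc c' hc).symm
          _ < a ♯ b ♯ c := nadd_lt_nadd_left hc _

theorem nadd_right_comm (a b c : Ordinal) : a ♯ b ♯ c = a ♯ c ♯ b := by
  rw [nadd_assoc, nadd_comm b, ← nadd_assoc]

theorem nadd_nadd_nadd_comm (a b c d : Ordinal) : a ♯ b ♯ (c ♯ d) = a ♯ c ♯ (b ♯ d) := by
  rw [← nadd_assoc, nadd_right_comm a b c, nadd_assoc (a ♯ c)]

theorem le_self_nadd (a b : Ordinal) : a ≤ a ♯ b := by
  induction a using WellFoundedLT.induction with | ind a ih =>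
  exact le_of_forall_lt fun x hx ↦ (ih x hx).trans_lt (nadd_lt_nadd_right hx b)

@[simp]
theorem nadd_zero (a : Ordinal) : a ♯ 0 = a := by
  induction a using WellFoundedLT.induction with | ind a ih =>
  refine le_antisymm (nadd_le_iff.2 ⟨fun a' ha ↦ ?_, fun _ hb ↦ absurd hb not_lt_zero⟩)
    (le_self_nadd a 0)
  rwa [ih a' ha]

@[simp]
theorem zero_nadd (a : Ordinal) : 0 ♯ a = a := by
  rw [nadd_comm, nadd_zero]

theorem nadd_succ (a b : Ordinal) : a ♯ succ b = succ (a ♯ b) := by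
  induction a using WellFoundedLT.induction with | ind a ih =>
  refine le_antisymm (nadd_le_iff.2 ⟨fun a' ha ↦ ?_, fun b' hb ↦ ?_⟩)
    (succ_le_of_lt (nadd_lt_nadd_left (lt_succ b) a))
  · rw [ih a' ha]
    exact succ_lt_succ (nadd_lt_nadd_right ha b)
  · exact lt_succ_of_le (nadd_le_nadd_left (lt_succ_iff.1 hb) a)

theorem nadd_natCast (a : Ordinal) (n : ℕ) : a ♯ n = a + n := by
  induction n with
  | zero => simp
  | succ n ih =>
    rw [Nat.cast_succ, ← add_assoc, ← ih, ← succ_eq_add_one, nadd_succ, succ_eq_add_one]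

theorem add_le_nadd (a b : Ordinal) : a + b ≤ a ♯ b := by
  induction b using WellFoundedLT.induction with | ind b ih =>
  rcases eq_or_ne b 0 with rfl | hb
  · simp
  refine le_of_forall_lt fun x hx ↦ ?_
  obtain ⟨b', hb', hx⟩ := (lt_add_iff hb).1 hx
  exact hx.trans_lt ((ih b' hb').trans_lt (nadd_lt_nadd_left hb' a))

theorem exists_eq_mul_natCast_add {x b : Ordinal} {m : ℕ} (hb : b ≠ 0) (hx : x < b * m) :
    ∃ q < m, ∃ r < b, x = b * q + r := by
  have hq : x / b < m := (lt_mul_iff_div_lt hb).1 hx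
  obtain ⟨q, hq'⟩ := lt_omega0.1 (hq.trans (natCast_lt_omega0 m))
  exact ⟨q, by exact_mod_cast hq' ▸ hq, x % b, mod_lt x hb, by rw [← hq', div_add_mod]⟩

section Principal

variable {e : Ordinal.{u}}

theorem omega0_opow_mul_nadd_of_lt (hP : IsPrincipal (· ♯ ·) (ω ^ e)) (m : ℕ) {r : Ordinal}
    (hr : r < ω ^ e) : ω ^ e * m ♯ r = ω ^ e * m + r := by
  induction m using Nat.strong_induction_on generalizing r with | _ m ihm =>
  induction r using WellFoundedLT.induction with | ind r ihr =>
  refine le_antisymm (nadd_le_iff.2 ⟨fun x hx ↦ ?_, fun r' hr' ↦ ?_⟩) (add_le_nadd _ _)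
  · obtain ⟨q, hq, ρ, hρ, rfl⟩ := exists_eq_mul_natCast_add (opow_ne_zero e omega0_ne_zero) hx
    have hρr : ρ ♯ r < ω ^ e := hP hρ hr
    calc (ω ^ e * q + ρ) ♯ r ≤ ω ^ e * q ♯ ρ ♯ r := nadd_le_nadd_right (add_le_nadd _ _) r
      _ = ω ^ e * q + (ρ ♯ r) := by rw [nadd_assoc, ihm q hq hρr]
      _ < ω ^ e * ↑(q + 1) := by rw [Nat.cast_succ, mul_add_one]; gcongr
      _ ≤ ω ^ e * m := by gcongr; exact Nat.cast_le.2 hq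
      _ ≤ ω ^ e * m + r := le_self_add
  · rw [ihr r' hr' (hr'.trans hr)]
    gcongr

theorem omega0_opow_mul_nadd_omega0_opow_mul (hP : IsPrincipal (· ♯ ·) (ω ^ e)) (a b : ℕ) :
    ω ^ e * a ♯ ω ^ e * b = ω ^ e * ↑(a + b) := by
  suffices h : ∀ n a b : ℕ, a + b = n → ω ^ e * a ♯ ω ^ e * b = ω ^ e * ↑(a + b) from h _ a b rfl
  intro n
  induction n using Nat.strong_induction_on with | _ n ih =>
  have half : ∀ a b : ℕ, a + b = n → ∀ x < ω ^ e * a, x ♯ ω ^ e * b < ω ^ e * ↑(a + b) := by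
    intro a b hab x hx
    obtain ⟨q, hq, ρ, hρ, rfl⟩ := exists_eq_mul_natCast_add (opow_ne_zero e omega0_ne_zero) hx
    calc (ω ^ e * q + ρ) ♯ ω ^ e * b ≤ ω ^ e * q ♯ ρ ♯ ω ^ e * b :=
          nadd_le_nadd_right (add_le_nadd _ _) _
      _ = ω ^ e * ↑(q + b) + ρ := by
          rw [nadd_right_comm, ih (q + b) (by omega) q b rfl, omega0_opow_mul_nadd_of_lt hP _ hρ]
      _ < ω ^ e * ↑(q + b + 1) := by rw [Nat.cast_succ, mul_add_one]; gcongr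
      _ ≤ ω ^ e * ↑(a + b) := by gcongr ω ^ e * ?_; exact Nat.cast_le.2 (by omega)
  intro a b hn
  refine le_antisymm (nadd_le_iff.2 ⟨half a b hn, fun y hy ↦ ?_⟩) ?_
  · rw [nadd_comm, add_comm a]
    exact half b a (by omega) y hy
  · rw [Nat.cast_add, mul_add]
    exact add_le_nadd _ _

theorem nadd_lt_omega0_opow_mul (hP : IsPrincipal (· ♯ ·) (ω ^ e)) {x y : Ordinal} {m n : ℕ}
    (hx : x < ω ^ e * m) (hy : y < ω ^ e * n) : x ♯ y < ω ^ e * ↑(m + n) := by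
  obtain ⟨q, hq, r, hr, rfl⟩ := exists_eq_mul_natCast_add (opow_ne_zero e omega0_ne_zero) hx
  obtain ⟨q', hq', r', hr', rfl⟩ := exists_eq_mul_natCast_add (opow_ne_zero e omega0_ne_zero) hy
  calc (ω ^ e * q + r) ♯ (ω ^ e * q' + r') ≤ ω ^ e * q ♯ r ♯ (ω ^ e * q' ♯ r') :=
        nadd_le_nadd (add_le_nadd _ _) (add_le_nadd _ _)
    _ = ω ^ e * ↑(q + q') + (r ♯ r') := by
        rw [nadd_nadd_nadd_comm, omega0_opow_mul_nadd_omega0_opow_mul hP,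
          omega0_opow_mul_nadd_of_lt hP _ (hP hr hr')]
    _ < ω ^ e * ↑(q + q' + 1) := by rw [Nat.cast_succ, mul_add_one]; gcongr; exact hP hr hr'
    _ ≤ ω ^ e * ↑(m + n) := by gcongr ω ^ e * ?_; exact Nat.cast_le.2 (by omega)

end Principal

theorem isPrincipal_nadd_omega0_opow (e : Ordinal) : IsPrincipal (· ♯ ·) (ω ^ e) := by
  induction e using WellFoundedLT.induction with | ind e ih =>
  intro x y hx hy
  rcases eq_or_ne e 0 with rfl | he
  · rw [opow_zero, lt_one_iff] at hx hy
    simp [hx, hy]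
  obtain ⟨c, hc, m, hxm⟩ := (lt_omega0_opow he).1 hx
  obtain ⟨c', hc', n, hyn⟩ := (lt_omega0_opow he).1 hy
  have hmax : max c c' < e := max_lt hc hc'
  have hx' : x < ω ^ max c c' * m := hxm.trans_le (by gcongr; exacts [omega0_pos, le_max_left _ _])
  have hy' : y < ω ^ max c c' * n := hyn.trans_le (by gcongr; exacts [omega0_pos, le_max_right _ _])
  exact (nadd_lt_omega0_opow_mul (ih _ hmax) hx' hy').trans
    (opow_mul_lt_opow (natCast_lt_omega0 _) hmax)

theorem omega0_opow_mul_add_natCast_nadd (e : Ordinal) (a s b t : ℕ) :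
    (ω ^ e * a + s) ♯ (ω ^ e * b + t) = ω ^ e * ↑(a + b) + ↑(s + t) := by
  rw [← nadd_natCast (ω ^ e * a), ← nadd_natCast (ω ^ e * b), nadd_nadd_nadd_comm,
    omega0_opow_mul_nadd_omega0_opow_mul (isPrincipal_nadd_omega0_opow e),
    nadd_natCast (s : Ordinal), ← Nat.cast_add, nadd_natCast]

theorem natCast_opow_of_isSuccPrelimit {k : ℕ} (hk : 1 < k) {l : Ordinal} (hl : IsSuccPrelimit l) :
    (k : Ordinal) ^ l = ω ^ (l / ω) := by
  obtain ⟨e, rfl⟩ := isSuccPrelimit_iff_omega0_dvd.1 hl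
  rw [mul_div_cancel _ omega0_ne_zero, opow_mul,
    opow_omega0 (by exact_mod_cast hk) (natCast_lt_omega0 k)]

theorem exists_isSuccPrelimit_add_natCast (β : Ordinal) :
    ∃ μ, IsSuccPrelimit μ ∧ ∃ m : ℕ, μ + m = β := by
  obtain ⟨m, hm⟩ := lt_omega0.1 (mod_lt β omega0_ne_zero)
  exact ⟨_, isSuccPrelimit_iff_omega0_dvd.2 (dvd_mul_right _ _), m, hm ▸ div_add_mod β ω⟩

/-- Needed for `hNil.{u, v}` with unrelated universes, as in the finite case of the theorem. -/
instance small_Iio_natCast (n : ℕ) : Small.{v} (Set.Iio (n : Ordinal.{u})) := by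
  have := ((Set.finite_Iio n).image ((↑) : ℕ → Ordinal.{u})).to_subtype
  rw [natCast_image_Iio] at this
  infer_instance

end Ordinal

open Ordinal

theorem nmulNat_mono {γ δ : Ordinal} (h : γ ≤ δ) (j : ℕ) : nmulNat γ j ≤ nmulNat δ j := by
  induction j with
  | zero => exact le_rfl
  | succ j ih => exact nadd_le_nadd ih h

theorem nmulNat_omega0_opow_mul_add_natCast (e : Ordinal) (a s j : ℕ) :
    nmulNat (ω ^ e * a + s) j = ω ^ e * ↑(a * j) + ↑(s * j) := by
  induction j with
  | zero => simp [nmulNat]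
  | succ j ih => rw [nmulNat, ih, omega0_opow_mul_add_natCast_nadd, Nat.mul_succ, Nat.mul_succ]

theorem nmulNat_natCast (s j : ℕ) : nmulNat (s : Ordinal) j = ↑(s * j) := by
  simpa using nmulNat_omega0_opow_mul_add_natCast 0 0 s j

section hNil

variable (k : ℕ)

theorem hNil_zero : hNil.{u, v} k 0 = 0 := by
  rw [hNil]
  have : IsEmpty (Set.Iio (0 : Ordinal.{u})) := ⟨fun β ↦ not_lt_zero (Set.mem_Iio.1 β.2)⟩
  exact (ciSup_of_empty _).trans Ordinal.bot_eq_zero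

theorem hNil_mono {α β : Ordinal.{u}} [Small.{v} (Set.Iio α)] (h : β ≤ α) :
    hNil.{u, v} k β ≤ hNil k α := by
  rw [hNil, hNil]
  exact Ordinal.iSup_le fun γ ↦ Ordinal.le_iSup (fun γ : Set.Iio α ↦ nmulNat (hNil k γ.1) k + 1)
    ⟨γ.1, γ.2.trans_le h⟩

theorem hNil_succ (α : Ordinal.{u}) [Small.{v} (Set.Iio (α + 1))] :
    hNil.{u, v} k (α + 1) = nmulNat (hNil k α) k + 1 := by
  have : Small.{v} (Set.Iio α) := small_subset (Set.Iio_subset_Iio (lt_add_one α).le)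
  apply le_antisymm
  · rw [hNil]
    refine Ordinal.iSup_le fun β ↦ ?_
    have hβ : β.1 ≤ α := lt_add_one_iff.1 β.2
    exact add_le_add_left (nmulNat_mono (hNil_mono k hβ) k) 1
  · conv_rhs => rw [hNil]
    exact Ordinal.le_iSup (fun β : Set.Iio (α + 1) ↦ nmulNat (hNil k β.1) k + 1)
      ⟨α, lt_add_one α⟩

theorem hNil_natCast (n : ℕ) : hNil.{u, v} k n = ↑(∑ i ∈ range n, k ^ i) := by
  induction n with
  | zero => simpa using hNil_zero k
  | succ n ih =>
    have : Small.{v} (Set.Iio ((n : Ordinal.{u}) + 1)) := by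
      rw [← Nat.cast_succ]; infer_instance
    rw [Nat.cast_succ, hNil_succ, ih, nmulNat_natCast, geom_sum_succ, mul_comm, Nat.cast_add_one]

theorem hNil_add_natCast_of_eq (hk : 1 < k) {l : Ordinal} (hl : IsSuccPrelimit l)
    (h : hNil k l = k ^ l) (n : ℕ) :
    hNil k (l + n) = k ^ (l + n) + ↑(∑ i ∈ range n, k ^ i) := by
  have hpow (j : ℕ) : (k : Ordinal) ^ (l + j) = ω ^ (l / ω) * ↑(k ^ j) := by
    rw [opow_add, natCast_opow_of_isSuccPrelimit hk hl, opow_natCast, natCast_pow]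
  induction n with
  | zero => simpa using h
  | succ n ih =>
    rw [Nat.cast_succ, ← add_assoc, hNil_succ, ih, hpow, nmulNat_omega0_opow_mul_add_natCast,
      add_assoc (ω ^ (l / ω) * _), ← Nat.cast_add_one, add_assoc l, ← Nat.cast_add_one, hpow,
      pow_succ, geom_sum_succ, mul_comm k]

theorem hNil_add_natCast_bounds (hk : 2 ≤ k) {μ : Ordinal} (hμ : IsSuccPrelimit μ)
    (h : μ ≠ 0 → hNil k μ = k ^ μ) (m : ℕ) :
    k ^ (μ + m) ≤ hNil k (μ + m + 1) ∧ hNil k (μ + m) < k ^ (μ + m + 1) := by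
  have hk0 : (0 : Ordinal) < k := by exact_mod_cast (by omega : 0 < k)
  have hgeom : ∑ i ∈ range m, k ^ i < k ^ m := Nat.geomSum_lt hk (by simp)
  rw [add_assoc μ, ← Nat.cast_add_one]
  rcases eq_or_ne μ 0 with rfl | hμ0
  · simp only [zero_add, hNil_natCast, opow_natCast, ← natCast_pow, Nat.cast_le, Nat.cast_lt]
    exact ⟨by rw [geom_sum_succ']; exact le_self_add, hgeom.trans (Nat.pow_lt_pow_succ (by omega))⟩
  have hform := hNil_add_natCast_of_eq k (by omega) hμ (h hμ0)
  rw [hform, hform]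
  refine ⟨(opow_le_opow_right hk0 (by gcongr; omega)).trans le_self_add, ?_⟩
  have hgeom' : (↑(∑ i ∈ range m, k ^ i) : Ordinal) < k ^ (μ + m) := calc
    _ < (k : Ordinal) ^ (m : Ordinal) := by rw [opow_natCast, ← natCast_pow]; exact_mod_cast hgeom
    _ ≤ k ^ (μ + m) := opow_le_opow_right hk0 le_add_self
  calc (k : Ordinal) ^ (μ + m) + ↑(∑ i ∈ range m, k ^ i) < k ^ (μ + m) + k ^ (μ + m) := by gcongr
    _ = k ^ (μ + m) * 2 := by rw [← one_add_one_eq_two, mul_add, mul_one]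
    _ ≤ k ^ (μ + m) * k := by gcongr; exact_mod_cast hk
    _ = k ^ (μ + ↑(m + 1)) := by rw [Nat.cast_add_one, ← add_assoc, opow_add_one]

theorem hNil_of_isSuccLimit (hk : 2 ≤ k) {l : Ordinal} (hl : IsSuccLimit l) :
    hNil k l = k ^ l := by
  induction l using WellFoundedLT.induction with | ind l ih =>
  have hk0 : (0 : Ordinal) < k := by exact_mod_cast (by omega : 0 < k)
  have bounds : ∀ β < l, k ^ β ≤ hNil k (β + 1) ∧ hNil k β < k ^ (β + 1) := by
    intro β hβ
    obtain ⟨μ, hμ, m, rfl⟩ := exists_isSuccPrelimit_add_natCast β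
    exact hNil_add_natCast_bounds k hk hμ
      (fun hμ0 ↦ ih μ (le_self_add.trans_lt hβ) (isSuccLimit_iff.2 ⟨hμ0, hμ⟩)) m
  apply le_antisymm
  · rw [hNil]
    refine Ordinal.iSup_le fun β ↦ ?_
    have hβ : β.1 + 1 < l := hl.add_one_lt β.2
    rw [← hNil_succ]
    exact (bounds _ hβ).2.le.trans (opow_le_opow_right hk0 (add_one_le_of_lt hβ))
  · exact (opow_le_of_isSuccLimit hk0.ne' hl).2 fun β hβ ↦
      (bounds β hβ).1.trans (hNil_mono k (hl.add_one_lt hβ).le)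

end hNil

/-- for `k ≥ 2` and `α = λ + n` with `λ` zero or a limit ordinal and `n : ℕ`:
if `λ = 0` then `hNil k α = (k^n - 1)/(k-1) = Σ_{i=0}^{n-1} k^i`, and otherwise
`hNil k α = k^α + Σ_{i=0}^{n-1} k^i` (ordinal exponentiation). -/
theorem stmt_10 (k : ℕ) (hk : 2 ≤ k) (l : Ordinal) (hl : l = 0 ∨ Order.IsSuccLimit l) (n : ℕ) :
    ((k ^ n - 1) / (k - 1) = ∑ i ∈ Finset.range n, k ^ i) ∧
    (l = 0 → hNil k (l + (n : Ordinal)) = ((∑ i ∈ Finset.range n, k ^ i : ℕ) : Ordinal)) ∧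
    (l ≠ 0 → hNil k (l + (n : Ordinal)) =
      (k : Ordinal) ^ (l + (n : Ordinal)) + ((∑ i ∈ Finset.range n, k ^ i : ℕ) : Ordinal)) := by
  refine ⟨(Nat.geomSum_eq hk n).symm, ?_, fun hl0 ↦ ?_⟩
  · rintro rfl
    rw [zero_add, hNil_natCast]
  · have hlim := hl.resolve_left hl0
    exact hNil_add_natCast_of_eq k (by omega) hlim.isSuccPrelimit
      (hNil_of_isSuccLimit k hk hlim) n
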